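/- arXiv:1312.0068 — 3 statements merged into one kernel-verified Lean document; each statement's English description precedes it below -/
import Mathlib

section
/- Let n ∈ ℕ with n ≥ 1 and let t ∈ ℝ with 0 < t < 1 (take σ = √t), and define K(w,z) = (1/n)·Σ_{m=0}^{n−1} p_m(w)·p_m(z). Then for all w, z ∈ ℂ and for both choices of sign ε ∈ {+1, −1}: deriv_w K(w,z) + ε·deriv_z K(w,z) − ε·n·(1−ε·t)·(w+ε·z)·K(w,z) = −ε·√((1−ε·t)/(1+ε·t))·(p_n(w)·p_{n−1}(z) + ε·p_{n−1}(w)·p_n(z)), where deriv_w and deriv_z denote the complex derivatives of K in the first and second variables respectively. -/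
/-!
The `p_m` are rescaled normalized Hermite polynomials, so with `a = √(n(1-t²))` they satisfy
`p_m' = a √m p_{m-1}` and the three-term recurrence `a z p_m = √(m+1) p_{m+1} + t √m p_{m-1}`.
Inserting the recurrence into `a (w + εz) K(w,z)` produces shifted sums which telescope against
the sums `∑ √m p_{m-1}(w) p_m(z)` making up `∂_w K` and `∂_z K`; since `ε² = 1` everything
cancels except the boundary term at `m = n`, which `a √n = n (1+εt) √((1-εt)/(1+εt))` turns
into the right-hand side.
-/

/-- The probabilists' Hermite polynomial evaluated at a complex argument. -/
noncomputable def hermiteC (m : ℕ) (z : ℂ) : ℂ :=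
  Polynomial.aeval z (Polynomial.hermite m)

/-- The orthonormal polynomials for the Gaussian potential with real `t ∈ (0,1)`
and `σ = √t`:
`p_m(z) = He_m(z·√(n(1−t²))/√t)·(√t)^m·√((n/π)·√(1−t²))/√(m!)`. -/
noncomputable def opolyR (n : ℕ) (t : ℝ) (m : ℕ) (z : ℂ) : ℂ :=
  hermiteC m (z * (Real.sqrt ((n : ℝ) * (1 - t ^ 2)) : ℂ) / (Real.sqrt t : ℂ)) *
    (Real.sqrt t : ℂ) ^ m *
    (Real.sqrt (((n : ℝ) / Real.pi) * Real.sqrt (1 - t ^ 2)) : ℂ) /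
    (Real.sqrt (Nat.factorial m) : ℂ)

/-- The (unnormalized, non-conjugated) kernel
`K(w,z) = (1/n)·Σ_{m=0}^{n−1} p_m(w)·p_m(z)`. -/
noncomputable def kerK (n : ℕ) (t : ℝ) (w z : ℂ) : ℂ :=
  (1 / (n : ℂ)) * ∑ m ∈ Finset.range n, opolyR n t m w * opolyR n t m z

open Polynomial in
theorem Polynomial.derivative_hermite (m : ℕ) :
    derivative (hermite m) = (m : ℤ[X]) * hermite (m - 1) := by
  induction m using Nat.strong_induction_on with
  | _ m ih =>
    match m with
    | 0 => simp
    | 1 => simp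
    | k + 2 =>
      have hk1 : derivative (hermite (k + 1)) = ((k + 1 : ℕ) : ℤ[X]) * hermite k :=
        ih (k + 1) (by omega)
      have hk := ih k (by omega)
      rw [show k + 2 - 1 = k + 1 from rfl, hermite_succ (k + 1), derivative_sub, derivative_mul,
        derivative_X, hk1, derivative_mul, derivative_natCast, hk, hermite_succ k, hk]
      push_cast
      ring

lemma hermiteC_hasDerivAt (m : ℕ) (u : ℂ) :
    HasDerivAt (hermiteC m) (m * hermiteC (m - 1) u) u := by
  have h := (Polynomial.hermite m).hasDerivAt_aeval (𝕜 := ℂ) u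
  rw [Polynomial.derivative_hermite] at h
  unfold hermiteC
  simpa using h

lemma hermiteC_succ (m : ℕ) (u : ℂ) :
    hermiteC (m + 1) u = u * hermiteC m u - m * hermiteC (m - 1) u := by
  simp [hermiteC, Polynomial.hermite_succ, Polynomial.derivative_hermite]

noncomputable def normalizedHermiteC (m : ℕ) (u : ℂ) : ℂ :=
  hermiteC m u / (Real.sqrt m.factorial : ℂ)

lemma sqrt_succ_div_sqrt_factorial_succ (m : ℕ) :
    (Real.sqrt (m + 1 : ℕ) : ℂ) / (Real.sqrt (m + 1).factorial : ℂ) =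
      1 / (Real.sqrt m.factorial : ℂ) := by
  have hm : (Real.sqrt m.factorial : ℂ) ≠ 0 :=
    Complex.ofReal_ne_zero.2 (Real.sqrt_pos.2 (by positivity)).ne'
  have hm1 : (Real.sqrt (m + 1 : ℕ) : ℂ) ≠ 0 :=
    Complex.ofReal_ne_zero.2 (Real.sqrt_pos.2 (by positivity)).ne'
  rw [Nat.factorial_succ, Nat.cast_mul, Real.sqrt_mul (by positivity), Complex.ofReal_mul]
  field_simp

lemma natCast_div_sqrt_factorial (m : ℕ) :
    (m : ℂ) / (Real.sqrt m.factorial : ℂ) =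
      (Real.sqrt m : ℂ) / (Real.sqrt (m - 1).factorial : ℂ) := by
  cases m with
  | zero => simp
  | succ k =>
    have hsq :
        ((k + 1 : ℕ) : ℂ) = (Real.sqrt (k + 1 : ℕ) : ℂ) * (Real.sqrt (k + 1 : ℕ) : ℂ) := by
      rw [← Complex.ofReal_mul, Real.mul_self_sqrt (by positivity), Complex.ofReal_natCast]
    rw [Nat.add_sub_cancel, hsq, mul_div_assoc, sqrt_succ_div_sqrt_factorial_succ, mul_one_div]

lemma normalizedHermiteC_hasDerivAt (m : ℕ) (u : ℂ) :
    HasDerivAt (normalizedHermiteC m)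
      ((Real.sqrt m : ℂ) * normalizedHermiteC (m - 1) u) u := by
  refine ((hermiteC_hasDerivAt m u).div_const _).congr_deriv ?_
  rw [normalizedHermiteC]
  linear_combination hermiteC (m - 1) u * natCast_div_sqrt_factorial m

lemma normalizedHermiteC_recurrence (m : ℕ) (u : ℂ) :
    u * normalizedHermiteC m u =
      (Real.sqrt (m + 1 : ℕ) : ℂ) * normalizedHermiteC (m + 1) u +
        (Real.sqrt m : ℂ) * normalizedHermiteC (m - 1) u := by
  simp only [normalizedHermiteC, hermiteC_succ]
  linear_combination (-(u * hermiteC m u - m * hermiteC (m - 1) u)) *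
    sqrt_succ_div_sqrt_factorial_succ m + hermiteC (m - 1) u * natCast_div_sqrt_factorial m

lemma pow_mul_sqrt_natCast (σ : ℂ) (m : ℕ) :
    σ ^ m * (Real.sqrt m : ℂ) = σ * σ ^ (m - 1) * (Real.sqrt m : ℂ) := by
  cases m with
  | zero => simp
  | succ k => rw [Nat.add_sub_cancel, pow_succ']

section opolyR

variable (n : ℕ) {t : ℝ}

lemma opolyR_eq_normalizedHermiteC (m : ℕ) (z : ℂ) :
    opolyR n t m z = (Real.sqrt ((n / Real.pi) * Real.sqrt (1 - t ^ 2)) : ℂ) *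
      (Real.sqrt t : ℂ) ^ m *
        normalizedHermiteC m (z * (Real.sqrt (n * (1 - t ^ 2)) : ℂ) / (Real.sqrt t : ℂ)) := by
  unfold opolyR normalizedHermiteC
  ring

lemma opolyR_hasDerivAt (ht : 0 < t) (m : ℕ) (z : ℂ) :
    HasDerivAt (opolyR n t m)
      ((Real.sqrt (n * (1 - t ^ 2)) : ℂ) * (Real.sqrt m : ℂ) * opolyR n t (m - 1) z) z := by
  simp only [funext (opolyR_eq_normalizedHermiteC n (t := t) m), opolyR_eq_normalizedHermiteC]
  set α := (Real.sqrt (n * (1 - t ^ 2)) : ℂ)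
  set σ := (Real.sqrt t : ℂ)
  set C := (Real.sqrt ((n / Real.pi) * Real.sqrt (1 - t ^ 2)) : ℂ)
  have hσ : σ * σ⁻¹ = 1 :=
    mul_inv_cancel₀ (Complex.ofReal_ne_zero.2 (Real.sqrt_pos.2 ht).ne')
  refine (((normalizedHermiteC_hasDerivAt m _).comp z
    (((hasDerivAt_id z).mul_const α).div_const σ)).const_mul _).congr_deriv ?_
  simp only [id]
  linear_combination C * normalizedHermiteC (m - 1) (z * α / σ) * α * σ⁻¹ *
      pow_mul_sqrt_natCast σ m +
    C * normalizedHermiteC (m - 1) (z * α / σ) * α * (Real.sqrt m : ℂ) * σ ^ (m - 1) * hσ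

lemma opolyR_recurrence (ht : 0 < t) (m : ℕ) (z : ℂ) :
    (Real.sqrt (n * (1 - t ^ 2)) : ℂ) * z * opolyR n t m z =
      (Real.sqrt (m + 1 : ℕ) : ℂ) * opolyR n t (m + 1) z +
        t * (Real.sqrt m : ℂ) * opolyR n t (m - 1) z := by
  have hσ : (Real.sqrt t : ℂ) ≠ 0 := Complex.ofReal_ne_zero.2 (Real.sqrt_pos.2 ht).ne'
  have hσ2 : (Real.sqrt t : ℂ) ^ 2 = t := by
    rw [← Complex.ofReal_pow, Real.sq_sqrt ht.le]
  simp only [opolyR_eq_normalizedHermiteC]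
  set u := z * (Real.sqrt (n * (1 - t ^ 2)) : ℂ) / (Real.sqrt t : ℂ)
  have hu : (Real.sqrt (n * (1 - t ^ 2)) : ℂ) * z = Real.sqrt t * u := by
    simp only [u]; field_simp
  set C := (Real.sqrt ((n / Real.pi) * Real.sqrt (1 - t ^ 2)) : ℂ)
  set σ := (Real.sqrt t : ℂ)
  linear_combination C * σ ^ m * normalizedHermiteC m u * hu +
    C * σ ^ (m + 1) * normalizedHermiteC_recurrence m u +
    C * normalizedHermiteC (m - 1) u * σ * pow_mul_sqrt_natCast σ m +
    C * normalizedHermiteC (m - 1) u * σ ^ (m - 1) * (Real.sqrt m : ℂ) * hσ2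

end opolyR

open Finset

section ChristoffelDarboux

-- `b 0 = 0` kills the `m = 0` terms, where `m - 1` truncates to `0`.
variable (p : ℕ → ℂ → ℂ) (b : ℕ → ℂ) (n : ℕ)

lemma sum_shift_eq_add (hb : b 0 = 0) (x y : ℂ) :
    ∑ m ∈ range n, b (m + 1) * p m x * p (m + 1) y =
      ∑ m ∈ range n, b m * p (m - 1) x * p m y + b n * p (n - 1) x * p n y := by
  have h := sum_range_succ' (fun m => b m * p (m - 1) x * p m y) n
  rw [sum_range_succ, hb] at h
  simpa using h.symm

lemma mul_sum_eq_of_recurrence (a t : ℂ) (hb : b 0 = 0)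
    (hrec : ∀ m z, a * z * p m z = b (m + 1) * p (m + 1) z + t * b m * p (m - 1) z) (x y : ℂ) :
    a * y * ∑ m ∈ range n, p m x * p m y =
      ∑ m ∈ range n, b m * p (m - 1) x * p m y + b n * p (n - 1) x * p n y +
        t * ∑ m ∈ range n, b m * p (m - 1) y * p m x := by
  rw [← sum_shift_eq_add p b n hb, mul_sum, mul_sum, ← sum_add_distrib]
  refine sum_congr rfl fun m _ => ?_
  linear_combination p m x * hrec m y

lemma hasDerivAt_sum_mul (a : ℂ) (hderiv : ∀ m z, HasDerivAt (p m) (a * b m * p (m - 1) z) z)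
    (x y : ℂ) :
    HasDerivAt (fun x' => ∑ m ∈ range n, p m x' * p m y)
      (a * ∑ m ∈ range n, b m * p (m - 1) x * p m y) x := by
  refine (HasDerivAt.fun_sum fun m _ => (hderiv m x).mul_const (p m y)).congr_deriv ?_
  rw [mul_sum]
  exact sum_congr rfl fun m _ => by ring

theorem christoffelDarboux_of_recurrence (a t ε : ℂ) (hε : ε ^ 2 = 1) (hb : b 0 = 0)
    (hderiv : ∀ m z, HasDerivAt (p m) (a * b m * p (m - 1) z) z)
    (hrec : ∀ m z, a * z * p m z = b (m + 1) * p (m + 1) z + t * b m * p (m - 1) z) (w z : ℂ) :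
    (1 + ε * t) * (deriv (fun w' => ∑ m ∈ range n, p m w' * p m z) w +
        ε * deriv (fun z' => ∑ m ∈ range n, p m w * p m z') z) -
      ε * a ^ 2 * (w + ε * z) * ∑ m ∈ range n, p m w * p m z =
      -ε * a * b n * (p n w * p (n - 1) z + ε * p (n - 1) w * p n z) := by
  have hsymm : ∀ x y : ℂ, ∑ m ∈ range n, p m x * p m y = ∑ m ∈ range n, p m y * p m x :=
    fun x y => sum_congr rfl fun m _ => mul_comm _ _
  have hw := (hasDerivAt_sum_mul p b n a hderiv w z).deriv
  have hz := (hasDerivAt_sum_mul p b n a hderiv z w).deriv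
  simp only [← hsymm w] at hz
  rw [hw, hz]
  have hrz := mul_sum_eq_of_recurrence p b n a t hb hrec w z
  have hrw := mul_sum_eq_of_recurrence p b n a t hb hrec z w
  rw [← hsymm w] at hrw
  linear_combination (-ε * a) * hrw - ε ^ 2 * a * hrz -
    a * (∑ m ∈ range n, b m * p (m - 1) w * p m z) * hε

end ChristoffelDarboux

lemma sqrt_mul_one_sub_sq_mul_sqrt {n : ℝ} (hn : 0 ≤ n) {s : ℝ} (hs : |s| < 1) :
    Real.sqrt (n * (1 - s ^ 2)) * Real.sqrt n = n * (1 + s) * Real.sqrt ((1 - s) / (1 + s)) := by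
  obtain ⟨hs₁, hs₂⟩ := abs_lt.1 hs
  have hpos : 0 < 1 + s := by linarith
  calc Real.sqrt (n * (1 - s ^ 2)) * Real.sqrt n
      = n * Real.sqrt ((1 + s) ^ 2 * ((1 - s) / (1 + s))) := by
        rw [Real.sqrt_mul hn, mul_right_comm, Real.mul_self_sqrt hn]
        congr 2
        field_simp
        ring
    _ = n * (1 + s) * Real.sqrt ((1 - s) / (1 + s)) := by
        rw [Real.sqrt_mul (by positivity), Real.sqrt_sq hpos.le, mul_assoc]

/-- the Christoffel–Darboux type identities for `K`: for both signs
`ε = ±1` and all `w, z ∈ ℂ`,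
`∂_w K + ε·∂_z K − ε·n·(1−ε·t)·(w+ε·z)·K = −ε·√((1−ε·t)/(1+ε·t))·(p_n(w)p_{n−1}(z) + ε·p_{n−1}(w)p_n(z))`. -/
theorem stmt4 (n : ℕ) (hn : 1 ≤ n) (t : ℝ) (ht0 : 0 < t) (ht1 : t < 1)
    (ε : ℝ) (hε : ε = 1 ∨ ε = -1) (w z : ℂ) :
    deriv (fun w' => kerK n t w' z) w + (ε : ℂ) * deriv (fun z' => kerK n t w z') z -
        (ε : ℂ) * (n : ℂ) * (1 - (ε : ℂ) * (t : ℂ)) * (w + (ε : ℂ) * z) * kerK n t w z =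
      -(ε : ℂ) * (Real.sqrt ((1 - ε * t) / (1 + ε * t)) : ℂ) *
        (opolyR n t n w * opolyR n t (n - 1) z +
          (ε : ℂ) * opolyR n t (n - 1) w * opolyR n t n z) := by
  have hε2 : ε ^ 2 = 1 := by rcases hε with rfl | rfl <;> norm_num
  have hε2C : (ε : ℂ) ^ 2 = 1 := by exact_mod_cast hε2
  have hεt : |ε * t| < 1 := by rcases hε with rfl | rfl <;> simp [abs_of_pos ht0, ht1]
  have hCD := christoffelDarboux_of_recurrence (opolyR n t) (fun m => (Real.sqrt m : ℂ)) n
    (Real.sqrt (n * (1 - t ^ 2))) t ε hε2C (by simp)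
    (opolyR_hasDerivAt n ht0) (opolyR_recurrence n ht0) w z
  have hsqrt := sqrt_mul_one_sub_sq_mul_sqrt n.cast_nonneg hεt
  rw [mul_pow, hε2, one_mul] at hsqrt
  have hsqrtC : (Real.sqrt (n * (1 - t ^ 2)) : ℂ) * (Real.sqrt n : ℂ) =
      n * (1 + ε * t) * (Real.sqrt ((1 - ε * t) / (1 + ε * t)) : ℂ) := by
    exact_mod_cast hsqrt
  have ha2 : (Real.sqrt (n * (1 - t ^ 2)) : ℂ) ^ 2 = n * (1 - ε * t) * (1 + ε * t) := by
    rw [← Complex.ofReal_pow, Real.sq_sqrt (mul_nonneg n.cast_nonneg (by nlinarith))]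
    push_cast
    linear_combination (n : ℂ) * t ^ 2 * hε2C
  have hn0 : (n : ℂ) ≠ 0 := by exact_mod_cast (by omega : n ≠ 0)
  have hεt0 : (1 + ε * t : ℂ) ≠ 0 := by
    exact_mod_cast (by linarith [abs_lt.1 hεt] : 1 + ε * t ≠ 0)
  have hn1 : (n : ℂ) * (1 / n) = 1 := mul_one_div_cancel hn0
  simp only [kerK, deriv_const_mul_field]
  refine mul_left_cancel₀ (mul_ne_zero hn0 hεt0) ?_
  set U := ∑ m ∈ range n, opolyR n t m w * opolyR n t m z
  set P := opolyR n t n w * opolyR n t (n - 1) z + ε * opolyR n t (n - 1) w * opolyR n t n z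
  linear_combination (n : ℂ) * (1 / n) * hCD + (n : ℂ) * (1 / n) * ε * (w + ε * z) * U * ha2 -
    ε * P * (Real.sqrt (n * (1 - t ^ 2)) : ℂ) * (Real.sqrt n : ℂ) * hn1 - ε * P * hsqrtC
end

section
/- Let n ∈ ℕ with n ≥ 1 and let t ∈ ℝ with 0 < t < 1 (take σ = √t), and define K(w,z) = (1/n)·Σ_{m=0}^{n−1} p_m(w)·p_m(z) and the pre-kernel H(w,z) = exp(n·(−w·z + t·w²/2 + t·z²/2))·K(w,z). Then for all w, z ∈ ℂ: deriv_w H(w,z) = (t·p_n(w)·p_{n−1}(z) − p_{n−1}(w)·p_n(z))·exp(n·(−w·z + t·w²/2 + t·z²/2))/√(1−t²), and deriv_z H(w,z) = (−p_n(w)·p_{n−1}(z) + t·p_{n−1}(w)·p_n(z))·exp(n·(−w·z + t·w²/2 + t·z²/2))/√(1−t²), where deriv_w and deriv_z denote the complex derivatives of H in the first and second variables respectively. -/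
/-- The pre-kernel `H(w,z) = exp(n·(−w·z + t·w²/2 + t·z²/2))·K(w,z)`. -/
noncomputable def preH (n : ℕ) (t : ℝ) (w z : ℂ) : ℂ :=
  Complex.exp ((n : ℂ) * (-(w * z) + (t : ℂ) * w ^ 2 / 2 + (t : ℂ) * z ^ 2 / 2)) *
    kerK n t w z

/-! The `w`-derivative of `H` is `e^E (n(tw - z)K + ∂_w K)`. The normalised Hermite functions
`qₘ = Heₘ/√(m!)` satisfy the ladder relations `x qₘ = √(m+1) qₘ₊₁ + √m qₘ₋₁` and `qₘ' = √m qₘ₋₁`;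
after the rescaling `pₘ(z) = A σ^m qₘ(zc/σ)` with `c = √(n(1-t²))` they become
`c z pₘ = √(m+1) pₘ₊₁ + t √m pₘ₋₁` and `pₘ' = c √m pₘ₋₁`. By the recurrence, the sum
`c(tu - v) Σ pₘ(u)pₘ(v) + (1 - t²) Σ √m pₘ₋₁(u)pₘ(v)` telescopes (Christoffel–Darboux) to
`√n (t pₙ(u)pₙ₋₁(v) - pₙ₋₁(u)pₙ(v))`, and `c² = n(1 - t²)` turns this into the formula for the
`w`-derivative. The `z`-derivative follows from the symmetry `H(w,z) = H(z,w)`. -/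

open Polynomial

theorem derivative_hermite_succ (m : ℕ) :
    derivative (hermite (m + 1)) = (m + 1) • hermite m := by
  induction m with
  | zero => simp
  | succ k ih =>
    rw [hermite_succ (k + 1), map_sub, derivative_mul, derivative_X, one_mul, ih, map_nsmul,
      hermite_succ k]
    simp only [nsmul_eq_mul]
    push_cast
    ring

theorem hasDerivAt_hermiteC_succ (m : ℕ) (x : ℂ) :
    HasDerivAt (hermiteC (m + 1)) ((m + 1) * hermiteC m x) x := by
  have h := Polynomial.hasDerivAt_aeval (hermite (m + 1)) x
  rwa [derivative_hermite_succ, map_nsmul, nsmul_eq_mul, Nat.cast_succ] at h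

theorem mul_hermiteC_succ (m : ℕ) (x : ℂ) :
    x * hermiteC (m + 1) x = hermiteC (m + 2) x + (m + 1) * hermiteC m x := by
  simp only [hermiteC, hermite_succ (m + 1), derivative_hermite_succ, map_sub, map_mul, aeval_X,
    nsmul_eq_mul, map_natCast]
  push_cast; ring

theorem hermiteC_zero (x : ℂ) : hermiteC 0 x = 1 := by simp [hermiteC]

theorem hermiteC_one (x : ℂ) : hermiteC 1 x = x := by simp [hermiteC]

theorem Complex.ofReal_sqrt_mul_self {x : ℝ} (hx : 0 ≤ x) : ((√x : ℝ) : ℂ) * (√x : ℝ) = x := by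
  exact_mod_cast Real.mul_self_sqrt hx

theorem Complex.ofReal_sqrt_natCast_ne_zero {m : ℕ} (hm : m ≠ 0) : ((√m : ℝ) : ℂ) ≠ 0 := by
  simpa [Real.sqrt_eq_zero'] using hm

theorem Complex.ofReal_sqrt_factorial_succ (m : ℕ) :
    ((√((m + 1).factorial : ℝ) : ℝ) : ℂ) = (√(m + 1 : ℝ) : ℝ) * (√(m.factorial : ℝ) : ℝ) := by
  rw [← Complex.ofReal_mul, ← Real.sqrt_mul (by positivity), Nat.factorial_succ]
  push_cast; rfl

theorem Complex.ofReal_sqrt_factorial_ne_zero (m : ℕ) : ((√(m.factorial : ℝ) : ℝ) : ℂ) ≠ 0 := by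
  exact_mod_cast (Real.sqrt_pos.2 (by positivity : (0 : ℝ) < m.factorial)).ne'

noncomputable def normHermiteC (m : ℕ) (x : ℂ) : ℂ :=
  hermiteC m x / (√(m.factorial : ℝ) : ℝ)

-- At `m = 0` the truncated index `m - 1` is `0`, but its coefficient `√0` vanishes.
theorem mul_normHermiteC (m : ℕ) (x : ℂ) :
    x * normHermiteC m x = (√(m + 1 : ℝ) : ℝ) * normHermiteC (m + 1) x
      + (√m : ℝ) * normHermiteC (m - 1) x := by
  cases m with
  | zero => simp [normHermiteC, hermiteC_zero, hermiteC_one]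
  | succ k =>
    have hrec := mul_hermiteC_succ k x
    have hk := Complex.ofReal_sqrt_mul_self (Nat.cast_nonneg (k + 1) : (0 : ℝ) ≤ (k + 1 : ℕ))
    simp only [normHermiteC, Nat.add_sub_cancel, Complex.ofReal_sqrt_factorial_succ]
    have := Complex.ofReal_sqrt_factorial_ne_zero k
    have := Complex.ofReal_sqrt_natCast_ne_zero (Nat.succ_ne_zero k)
    have := Complex.ofReal_sqrt_natCast_ne_zero (Nat.succ_ne_zero (k + 1))
    push_cast at *
    field_simp
    linear_combination hrec - hermiteC k x * hk

theorem hasDerivAt_normHermiteC (m : ℕ) (x : ℂ) :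
    HasDerivAt (normHermiteC m) ((√m : ℝ) * normHermiteC (m - 1) x) x := by
  cases m with
  | zero =>
    have hconst : normHermiteC 0 = fun _ => 1 := by
      funext y; simp [normHermiteC, hermiteC_zero]
    simpa [hconst] using hasDerivAt_const x (1 : ℂ)
  | succ k =>
    refine ((hasDerivAt_hermiteC_succ k x).div_const _).congr_deriv ?_
    have hk := Complex.ofReal_sqrt_mul_self (Nat.cast_nonneg (k + 1) : (0 : ℝ) ≤ (k + 1 : ℕ))
    have := Complex.ofReal_sqrt_factorial_ne_zero k
    have := Complex.ofReal_sqrt_natCast_ne_zero (Nat.succ_ne_zero k)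
    simp only [normHermiteC, Nat.add_sub_cancel, Complex.ofReal_sqrt_factorial_succ]
    push_cast at *
    field_simp
    linear_combination -hermiteC k x * hk

section Rescaling

variable (q : ℕ → ℂ → ℂ) (A c s : ℂ)

noncomputable def rescaleSeq (m : ℕ) (z : ℂ) : ℂ := A * s ^ m * q m (z * c / s)

variable {q A c s}

theorem mul_rescaleSeq (hs : s ≠ 0)
    (hrec : ∀ m x, x * q m x = (√(m + 1 : ℝ) : ℝ) * q (m + 1) x + (√m : ℝ) * q (m - 1) x)
    (m : ℕ) (z : ℂ) :
    c * z * rescaleSeq q A c s m z = (√(m + 1 : ℝ) : ℝ) * rescaleSeq q A c s (m + 1) z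
      + s ^ 2 * (√m : ℝ) * rescaleSeq q A c s (m - 1) z := by
  simp only [rescaleSeq]
  set y := z * c / s
  have hy : c * z = s * y := by simp only [y]; field_simp
  have h := hrec m y
  cases m with
  | zero =>
    simp only [zero_add, Nat.cast_zero, Real.sqrt_zero, Real.sqrt_one, Complex.ofReal_zero,
      Complex.ofReal_one, pow_zero] at h ⊢
    linear_combination (A * s) * h + (A * q 0 y) * hy
  | succ k =>
    simp only [Nat.add_sub_cancel] at h ⊢
    linear_combination (A * s ^ (k + 2)) * h + (A * s ^ (k + 1) * q (k + 1) y) * hy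

theorem hasDerivAt_rescaleSeq (hs : s ≠ 0)
    (hder : ∀ m x, HasDerivAt (q m) ((√m : ℝ) * q (m - 1) x) x) (m : ℕ) (z : ℂ) :
    HasDerivAt (rescaleSeq q A c s m) (c * (√m : ℝ) * rescaleSeq q A c s (m - 1) z) z := by
  have hlin : HasDerivAt (fun z' : ℂ => z' * c / s) (c / s) z := by
    simpa using ((hasDerivAt_id z).mul_const c).div_const s
  refine (((hder m (z * c / s)).comp z hlin).const_mul (A * s ^ m)).congr_deriv ?_
  cases m with
  | zero => simp
  | succ k =>
    simp only [rescaleSeq, Nat.add_sub_cancel]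
    field_simp
    ring

end Rescaling

theorem sum_range_christoffelDarboux (p : ℕ → ℂ → ℂ) (c t : ℂ)
    (hrec : ∀ m x, c * x * p m x = (√(m + 1 : ℝ) : ℝ) * p (m + 1) x + t * (√m : ℝ) * p (m - 1) x)
    (N : ℕ) (u v : ℂ) :
    c * (t * u - v) * ∑ m ∈ Finset.range N, p m u * p m v
      + (1 - t ^ 2) * ∑ m ∈ Finset.range N, (√m : ℝ) * p (m - 1) u * p m v
      = (√N : ℝ) * (t * p N u * p (N - 1) v - p (N - 1) u * p N v) := by
  induction N with
  | zero => simp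
  | succ N ih =>
    rw [Finset.sum_range_succ, Finset.sum_range_succ, Nat.add_sub_cancel, Nat.cast_succ]
    linear_combination ih + (t * p N v) * hrec N u - p N u * hrec N v

section GaussianOrthonormal

variable {n : ℕ} {t : ℝ}

theorem opolyR_eq_rescaleSeq :
    opolyR n t = rescaleSeq normHermiteC (√((n : ℝ) / Real.pi * √(1 - t ^ 2)) : ℝ)
      (√((n : ℝ) * (1 - t ^ 2)) : ℝ) (√t : ℝ) := by
  funext m z
  simp only [opolyR, rescaleSeq, normHermiteC]
  ring

theorem mul_opolyR (ht0 : 0 < t) (m : ℕ) (z : ℂ) :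
    (√((n : ℝ) * (1 - t ^ 2)) : ℝ) * z * opolyR n t m z
      = (√(m + 1 : ℝ) : ℝ) * opolyR n t (m + 1) z + t * (√m : ℝ) * opolyR n t (m - 1) z := by
  have hs : ((√t : ℝ) : ℂ) ^ 2 = t := by exact_mod_cast Real.sq_sqrt ht0.le
  rw [opolyR_eq_rescaleSeq, ← hs]
  exact mul_rescaleSeq (by exact_mod_cast (Real.sqrt_pos.2 ht0).ne') mul_normHermiteC m z

theorem hasDerivAt_opolyR (ht0 : 0 < t) (m : ℕ) (z : ℂ) :
    HasDerivAt (opolyR n t m)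
      ((√((n : ℝ) * (1 - t ^ 2)) : ℝ) * (√m : ℝ) * opolyR n t (m - 1) z) z := by
  rw [opolyR_eq_rescaleSeq]
  exact hasDerivAt_rescaleSeq (by exact_mod_cast (Real.sqrt_pos.2 ht0).ne')
    hasDerivAt_normHermiteC m z

theorem hasDerivAt_kerK_left (ht0 : 0 < t) (w z : ℂ) :
    HasDerivAt (fun w' => kerK n t w' z)
      (1 / (n : ℂ) * ((√((n : ℝ) * (1 - t ^ 2)) : ℝ)
        * ∑ m ∈ Finset.range n, (√m : ℝ) * opolyR n t (m - 1) w * opolyR n t m z)) w := by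
  refine ((HasDerivAt.fun_sum fun m _ =>
    (hasDerivAt_opolyR ht0 m w).mul_const (opolyR n t m z)).const_mul (1 / (n : ℂ))).congr_deriv ?_
  simp only [Finset.mul_sum, mul_assoc]

theorem kerK_symm (w z : ℂ) : kerK n t w z = kerK n t z w := by
  simp only [kerK, mul_comm (opolyR n t _ w)]

theorem preH_symm (w z : ℂ) : preH n t w z = preH n t z w := by
  rw [preH, preH, kerK_symm]
  congr 2
  ring

theorem hasDerivAt_preH_left (hn : 1 ≤ n) (ht0 : 0 < t) (ht1 : t < 1) (w z : ℂ) :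
    HasDerivAt (fun w' => preH n t w' z)
      (((t : ℂ) * opolyR n t n w * opolyR n t (n - 1) z - opolyR n t (n - 1) w * opolyR n t n z)
        * Complex.exp ((n : ℂ) * (-(w * z) + (t : ℂ) * w ^ 2 / 2 + (t : ℂ) * z ^ 2 / 2))
        / (√(1 - t ^ 2) : ℝ)) w := by
  have hexp : HasDerivAt (fun w' : ℂ => (n : ℂ) * (-(w' * z) + (t : ℂ) * w' ^ 2 / 2
      + (t : ℂ) * z ^ 2 / 2)) ((n : ℂ) * (t * w - z)) w := by
    refine ((((hasDerivAt_id' w).mul_const z).neg.add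
      (((hasDerivAt_pow 2 w).const_mul (t : ℂ)).div_const 2)).add_const
        ((t : ℂ) * z ^ 2 / 2)).const_mul (n : ℂ) |>.congr_deriv ?_
    ring
  refine (hexp.cexp.mul (hasDerivAt_kerK_left ht0 w z)).congr_deriv ?_
  have hCD := sum_range_christoffelDarboux (opolyR n t) _ t (mul_opolyR ht0) n w z
  have hq : 0 < 1 - t ^ 2 := by nlinarith
  have hr := Complex.ofReal_sqrt_mul_self hq.le
  have hsn := Complex.ofReal_sqrt_mul_self (Nat.cast_nonneg n : (0 : ℝ) ≤ n)
  have hc : ((√((n : ℝ) * (1 - t ^ 2)) : ℝ) : ℂ) = (√n : ℝ) * (√(1 - t ^ 2) : ℝ) := by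
    rw [Real.sqrt_mul (Nat.cast_nonneg n), Complex.ofReal_mul]
  have hr0 : ((√(1 - t ^ 2) : ℝ) : ℂ) ≠ 0 := by exact_mod_cast (Real.sqrt_pos.2 hq).ne'
  have hn0 : (n : ℂ) ≠ 0 := by exact_mod_cast (by omega : n ≠ 0)
  rw [hc] at hCD ⊢
  push_cast at hr hsn
  simp only [kerK]
  set S := ∑ m ∈ Finset.range n, opolyR n t m w * opolyR n t m z
  set T := ∑ m ∈ Finset.range n, (√m : ℝ) * opolyR n t (m - 1) w * opolyR n t m z
  field_simp
  linear_combination (√n : ℝ) * hCD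
    - ((√(1 - t ^ 2) : ℝ) * (t * w - z) * S
      - (t * opolyR n t n w * opolyR n t (n - 1) z - opolyR n t (n - 1) w * opolyR n t n z)) * hsn
    + ((√n : ℝ) * T) * hr

end GaussianOrthonormal

/-- the identities for the partial complex derivatives of the pre-kernel `H`. -/
theorem stmt5 (n : ℕ) (hn : 1 ≤ n) (t : ℝ) (ht0 : 0 < t) (ht1 : t < 1) (w z : ℂ) :
    deriv (fun w' => preH n t w' z) w =
      ((t : ℂ) * opolyR n t n w * opolyR n t (n - 1) z -
          opolyR n t (n - 1) w * opolyR n t n z) *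
        Complex.exp ((n : ℂ) * (-(w * z) + (t : ℂ) * w ^ 2 / 2 + (t : ℂ) * z ^ 2 / 2)) /
        (Real.sqrt (1 - t ^ 2) : ℂ) ∧
    deriv (fun z' => preH n t w z') z =
      (-(opolyR n t n w * opolyR n t (n - 1) z) +
          (t : ℂ) * opolyR n t (n - 1) w * opolyR n t n z) *
        Complex.exp ((n : ℂ) * (-(w * z) + (t : ℂ) * w ^ 2 / 2 + (t : ℂ) * z ^ 2 / 2)) /
        (Real.sqrt (1 - t ^ 2) : ℂ) := by
  have hleft := fun w z => (hasDerivAt_preH_left hn ht0 ht1 w z).deriv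
  refine ⟨hleft w z, ?_⟩
  rw [show (fun z' => preH n t w z') = fun z' => preH n t z' w from
    funext fun z' => preH_symm w z', hleft z w]
  ring_nf
end

section
/- Let 0 < δ < 1. Then the density of eigenvalues at the origin converges to 1/π uniformly in t: for every ε > 0 there exists N ∈ ℕ such that for all n ≥ N and all t ∈ ℂ with 0 < |t| ≤ 1 − δ (and any σ with σ² = conj(t)), | (1/n)·Σ_{m=0}^{n−1} |p_m(0)|² − 1/π | < ε. (Note V(0) = 0, so (1/n)·Σ_{m=0}^{n−1} |p_m(0)|² is the density ρ_n(0).) -/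
/-- The orthonormal polynomials for the Gaussian potential:
`p_m(z) = He_m(z·√(n(1−|t|²))/σ)·σ^m·√((n/π)·√(1−|t|²))/√(m!)` with `σ² = conj t`. -/
noncomputable def opoly (n : ℕ) (t σ : ℂ) (m : ℕ) (z : ℂ) : ℂ :=
  hermiteC m (z * (Real.sqrt ((n : ℝ) * (1 - ‖t‖ ^ 2)) : ℂ) / σ) * σ ^ m *
    (Real.sqrt (((n : ℝ) / Real.pi) * Real.sqrt (1 - ‖t‖ ^ 2)) : ℂ) /
    (Real.sqrt (Nat.factorial m) : ℂ)


/-!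
At `z = 0` only the constant coefficients of the Hermite polynomials survive, and `|σ|² = |t|`, so
with `r = |t|` the density is `ρ_n(0) = √(1 - r²)/π · ∑_{m<n} He_m(0)² r^m / m!`.
Since `He_{2k}(0) = (-1)^k (2k-1)!!` and odd Hermite polynomials vanish at `0`, the coefficient
of `r^{2k}` is `(2k-1)!!/(2k)!! = (1/2)_k / k!`, the `k`-th coefficient of the binomial series of
`(1 - x)^{-1/2}`. The full series therefore sums to `1/√(1 - r²)` and cancels the prefactor,
and the Weierstrass M-test with majorant `r = 1 - δ` makes the convergence uniform.
-/

open Polynomial Filter Finset Real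
open scoped Nat

theorem Nat.factorial_two_mul_eq (k : ℕ) : (2 * k)! = 2 ^ k * k ! * (2 * k - 1)‼ := by
  rcases k with _ | k
  · simp
  · rw [show 2 * (k + 1) = 2 * k + 1 + 1 by ring, Nat.factorial_eq_mul_doubleFactorial,
      show 2 * k + 1 + 1 = 2 * (k + 1) by ring, Nat.doubleFactorial_two_mul,
      show 2 * (k + 1) - 1 = 2 * k + 1 by omega]

theorem two_pow_mul_ascPochhammer_eval_half {K : Type*} [Field K] [CharZero K] (k : ℕ) :
    2 ^ k * (ascPochhammer K k).eval (1 / 2) = (2 * k - 1)‼ := by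
  induction k with
  | zero => simp
  | succ k ih =>
    rcases k with _ | k
    · norm_num
    · rw [show 2 * (k + 1) - 1 = 2 * k + 1 by omega] at ih
      rw [ascPochhammer_succ_eval, show 2 * (k + 1 + 1) - 1 = 2 * k + 1 + 2 by omega,
        Nat.doubleFactorial_add_two, Nat.cast_mul, ← ih]
      push_cast
      field_simp
      ring

theorem Ring.choose_add_sub_one_eq_ascPochhammer_eval_div {K : Type*} [Field K] [CharZero K]
    (a : K) (k : ℕ) :
    Ring.choose (a + k - 1) k = (ascPochhammer K k).eval a / k ! := by
  rw [eq_div_iff (Nat.cast_ne_zero.2 k.factorial_ne_zero), mul_comm, ← nsmul_eq_mul,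
    ← Ring.multichoose_eq, Ring.factorial_nsmul_multichoose_eq_ascPochhammer,
    ascPochhammer_smeval_eq_eval]

noncomputable def hermiteWeight (m : ℕ) : ℝ := ((hermite m).coeff 0 : ℝ) ^ 2 / m !

theorem hermiteWeight_nonneg (m : ℕ) : 0 ≤ hermiteWeight m := by
  unfold hermiteWeight
  positivity

theorem hermiteWeight_two_mul_add_one (k : ℕ) : hermiteWeight (2 * k + 1) = 0 := by
  rw [hermiteWeight, coeff_hermite_of_odd_add (by simp)]
  simp

theorem hermiteWeight_two_mul (k : ℕ) :
    hermiteWeight (2 * k) = Ring.choose (1 / 2 + k - 1 : ℝ) k := by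
  have hpos : 0 < (ascPochhammer ℝ k).eval (1 / 2) := ascPochhammer_pos k _ (by norm_num)
  rw [Ring.choose_add_sub_one_eq_ascPochhammer_eval_div, hermiteWeight, ← add_zero (2 * k),
    coeff_hermite_explicit, add_zero, Nat.factorial_two_mul_eq, Nat.choose_zero_right]
  push_cast
  rw [← two_pow_mul_ascPochhammer_eval_half, mul_pow, mul_pow, ← pow_mul, mul_comm k 2, pow_mul]
  field_simp
  ring

theorem hasSum_hermiteWeight_mul_pow {r : ℝ} (hr : |r| < 1) :
    HasSum (fun m => hermiteWeight m * r ^ m) (√(1 - r ^ 2))⁻¹ := by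
  have hr2 : r ^ 2 ∈ Metric.eball (0 : ℝ) 1 := by
    have : |r ^ 2| < 1 := by rw [abs_pow]; exact pow_lt_one₀ (abs_nonneg r) hr two_ne_zero
    simpa [Metric.mem_eball, ← ofReal_norm] using this
  have hbinom := (one_div_one_sub_rpow_hasFPowerSeriesOnBall_zero (1 / 2)).hasSum hr2
  simp only [FormalMultilinearSeries.ofScalars_apply_eq, smul_eq_mul, zero_add] at hbinom
  rw [sqrt_eq_rpow, inv_eq_one_div, ← add_zero (1 / _)]
  refine (hbinom.congr_fun fun k => ?_).even_add_odd (hasSum_zero.congr_fun fun k => ?_)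
  · rw [hermiteWeight_two_mul, pow_mul]
  · rw [hermiteWeight_two_mul_add_one, zero_mul]

theorem norm_opoly_zero_sq {t σ : ℂ} (hσ : σ ^ 2 = starRingEnd ℂ t) (n m : ℕ) :
    ‖opoly n t σ m 0‖ ^ 2 = n / π * √(1 - ‖t‖ ^ 2) * (hermiteWeight m * ‖t‖ ^ m) := by
  have hσt : ‖σ‖ ^ 2 = ‖t‖ := by rw [← norm_pow, hσ, Complex.norm_conj]
  simp only [opoly, hermiteC, zero_mul, zero_div, aeval_def, eval₂_at_zero, eq_intCast]
  rw [norm_div, norm_mul, norm_mul, norm_pow, Complex.norm_intCast, Complex.norm_real,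
    Complex.norm_real, norm_of_nonneg (sqrt_nonneg _), norm_of_nonneg (sqrt_nonneg _), div_pow,
    mul_pow, mul_pow, ← pow_mul, mul_comm m 2, pow_mul, hσt, sq_sqrt (by positivity),
    sq_sqrt (Nat.cast_nonneg _), sq_abs, hermiteWeight]
  ring

noncomputable def hermiteDensity (n : ℕ) (r : ℝ) : ℝ :=
  √(1 - r ^ 2) / π * ∑ m ∈ range n, hermiteWeight m * r ^ m

theorem one_div_mul_sum_norm_opoly_zero_sq {n : ℕ} (hn : n ≠ 0) {t σ : ℂ}
    (hσ : σ ^ 2 = starRingEnd ℂ t) :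
    1 / (n : ℝ) * ∑ m ∈ range n, ‖opoly n t σ m 0‖ ^ 2 = hermiteDensity n ‖t‖ := by
  simp only [norm_opoly_zero_sq hσ, hermiteDensity]
  rw [← mul_sum]
  field_simp

theorem tendstoUniformlyOn_hermiteDensity {ρ : ℝ} (hρ0 : 0 ≤ ρ) (hρ1 : ρ < 1) :
    TendstoUniformlyOn hermiteDensity (fun _ => 1 / π) atTop (Set.Icc 0 ρ) := by
  have hsum : Summable fun m => hermiteWeight m * ρ ^ m :=
    (hasSum_hermiteWeight_mul_pow (by rwa [abs_of_nonneg hρ0])).summable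
  have hbound : ∀ m, ∀ r ∈ Set.Icc 0 ρ,
      ‖√(1 - r ^ 2) / π * (hermiteWeight m * r ^ m)‖ ≤ hermiteWeight m * ρ ^ m := by
    rintro m r ⟨hr0, hrρ⟩
    have hfactor : √(1 - r ^ 2) / π ≤ 1 :=
      div_le_one_of_le₀ ((sqrt_le_one.2 (by nlinarith)).trans (by linarith [pi_gt_three]))
        pi_pos.le
    have := hermiteWeight_nonneg m
    rw [norm_of_nonneg (by positivity)]
    exact (mul_le_of_le_one_left (by positivity) hfactor).trans (by gcongr)
  refine (tendstoUniformlyOn_tsum_nat hsum hbound).congr (.of_forall fun n r _ => ?_)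
    |>.congr_right fun r ⟨hr0, hrρ⟩ => ?_
  · rw [hermiteDensity, mul_sum]
  · have hr : |r| < 1 := by rw [abs_of_nonneg hr0]; linarith
    have hpos : 0 < √(1 - r ^ 2) := sqrt_pos.2 (by nlinarith)
    dsimp only
    rw [tsum_mul_left, (hasSum_hermiteWeight_mul_pow hr).tsum_eq]
    field_simp

/-- the density of eigenvalues at the origin,
`ρ_n(0) = (1/n)·Σ_{m=0}^{n−1} |p_m(0)|²` (note `V(0) = 0`), converges to `1/π`
uniformly in `t` for `0 < |t| ≤ 1 − δ`. -/
theorem stmt14 (δ : ℝ) (hδ0 : 0 < δ) (hδ1 : δ < 1) :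
    ∀ ε : ℝ, 0 < ε → ∃ N : ℕ, ∀ n : ℕ, N ≤ n → ∀ t σ : ℂ,
      0 < ‖t‖ → ‖t‖ ≤ 1 - δ → σ ^ 2 = (starRingEnd ℂ) t →
      |(1 / (n : ℝ)) * ∑ m ∈ Finset.range n, ‖opoly n t σ m 0‖ ^ 2 -
          1 / Real.pi| < ε := by
  intro ε hε
  have huniform := tendstoUniformlyOn_hermiteDensity (ρ := 1 - δ) (by linarith) (by linarith)
  obtain ⟨N, hN⟩ := eventually_atTop.1 (Metric.tendstoUniformlyOn_iff.1 huniform ε hε)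
  refine ⟨max N 1, fun n hn t σ _ ht hσ => ?_⟩
  rw [one_div_mul_sum_norm_opoly_zero_sq (by omega) hσ, ← Real.dist_eq, dist_comm]
  exact hN n (le_of_max_le_left hn) ‖t‖ ⟨norm_nonneg t, ht⟩
end
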